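/- Let L be a positive isomorphism on a complex Hilbert space with ⟨Lx,x⟩ ≥ c > 0 for unit x. If T is a self-adjoint operator with ‖L − T‖ < min(1/‖L⁻¹‖, c/2), then the spectrum of T is contained in the open interval (c/3, ‖L‖ + c/2). -/

import Mathlib

/-!
On unit vectors `re ⟪L x, x⟫ ≥ c`, so by homogeneity `re ⟪L x, x⟫ ≥ c ‖x‖²` everywhere, and hence
`re ⟪T x, x⟫ ≥ (c - ‖L - T‖) ‖x‖² > (c / 2) ‖x‖²`. If the numerical range of an operator lies in
the half-plane `re z ≥ a`, so does its spectrum: for `re μ < a` the operator `T - μ` is coercive,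
hence invertible. As `T` is self-adjoint its spectrum is real, which gives the lower bound
`c / 2 > c / 3`; the upper bound is `|μ| ≤ ‖T‖ ≤ ‖L‖ + ‖L - T‖`.
-/

open RCLike
open scoped InnerProductSpace

namespace ContinuousLinearMap

variable {𝕜 E : Type*} [RCLike 𝕜] [NormedAddCommGroup E] [InnerProductSpace 𝕜 E]

theorem mul_sq_norm_le_re_inner_of_forall_norm_eq_one {T : E →L[𝕜] E} {c : ℝ}
    (h : ∀ x, ‖x‖ = 1 → c ≤ re ⟪T x, x⟫_𝕜) (x : E) : c * ‖x‖ ^ 2 ≤ re ⟪T x, x⟫_𝕜 := by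
  rcases eq_or_ne x 0 with rfl | hx
  · simp
  have hx' : (‖x‖ : 𝕜) ≠ 0 := by simpa using hx
  set u : E := (‖x‖⁻¹ : 𝕜) • x
  have hu : ‖u‖ = 1 := by simp [u, norm_smul, hx]
  have hxu : x = (‖x‖ : 𝕜) • u := by simp [u, smul_smul, hx']
  calc c * ‖x‖ ^ 2 ≤ re ⟪T u, u⟫_𝕜 * ‖x‖ ^ 2 := by gcongr; exact h u hu
    _ = re ⟪T x, x⟫_𝕜 := by
      rw [← reApplyInnerSelf_apply, ← reApplyInnerSelf_apply]
      conv_rhs => rw [hxu, reApplyInnerSelf_smul]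
      simp [mul_comm]

theorem sub_norm_sub_mul_sq_norm_le_re_inner {S T : E →L[𝕜] E} {c : ℝ}
    (h : ∀ x, c * ‖x‖ ^ 2 ≤ re ⟪S x, x⟫_𝕜) (x : E) :
    (c - ‖S - T‖) * ‖x‖ ^ 2 ≤ re ⟪T x, x⟫_𝕜 := by
  have hST : re ⟪(S - T) x, x⟫_𝕜 ≤ ‖S - T‖ * ‖x‖ ^ 2 :=
    calc re ⟪(S - T) x, x⟫_𝕜 ≤ ‖(S - T) x‖ * ‖x‖ :=
          (re_le_norm _).trans (norm_inner_le_norm _ _)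
      _ ≤ ‖S - T‖ * ‖x‖ * ‖x‖ := by gcongr; exact le_opNorm _ _
      _ = ‖S - T‖ * ‖x‖ ^ 2 := by ring
  simp only [sub_apply, inner_sub_left, map_sub] at hST
  linarith [h x]

theorem le_re_of_mem_spectrum_of_forall_mul_sq_norm_le [CompleteSpace E] {T : E →L[𝕜] E}
    {a : ℝ} (h : ∀ x, a * ‖x‖ ^ 2 ≤ re ⟪T x, x⟫_𝕜) {μ : 𝕜} (hμ : μ ∈ spectrum 𝕜 T) :
    a ≤ re μ := by
  by_contra! hμa
  have hgap : 0 < a - re μ := sub_pos.mpr hμa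
  refine spectrum.notMem_iff.mpr ?_ hμ
  rw [IsUnit.sub_iff]
  refine isUnit_of_forall_le_norm_inner_map _ (c := ⟨a - re μ, hgap.le⟩) hgap fun x ↦ ?_
  calc ‖x‖ ^ 2 * (a - re μ) ≤ re ⟪T x, x⟫_𝕜 - re μ * ‖x‖ ^ 2 := by linarith [h x]
    _ = re ⟪(T - algebraMap 𝕜 _ μ) x, x⟫_𝕜 := by
      simp [inner_sub_left, inner_smul_left, inner_self_eq_norm_sq_to_K]
    _ ≤ _ := re_le_norm _

end ContinuousLinearMap

theorem spectrum_perturbation_subset_Ioo_general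
    {H : Type*} [NormedAddCommGroup H] [InnerProductSpace ℂ H] [CompleteSpace H]
    (L L' T : H →L[ℂ] H)
    (c : ℝ) (hlb : ∀ x : H, ‖x‖ = 1 → c ≤ (inner ℂ (L x) x : ℂ).re)
    (hTsa : IsSelfAdjoint T)
    (hnear : ‖L - T‖ < min (1 / ‖L'‖) (c / 2)) :
    spectrum ℂ T ⊆ (fun t : ℝ => (t : ℂ)) '' Set.Ioo (c / 3) (‖L‖ + c / 2) := by
  nontriviality H
  have hLT : ‖L - T‖ < c / 2 := hnear.trans_le (min_le_right _ _)
  have hT : ∀ x, (c - ‖L - T‖) * ‖x‖ ^ 2 ≤ (inner ℂ (T x) x).re :=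
    ContinuousLinearMap.sub_norm_sub_mul_sq_norm_le_re_inner
      (ContinuousLinearMap.mul_sq_norm_le_re_inner_of_forall_norm_eq_one hlb)
  intro μ hμ
  refine ⟨μ.re, ⟨?_, ?_⟩, (hTsa.mem_spectrum_eq_re hμ).symm⟩
  · have : c - ‖L - T‖ ≤ μ.re :=
      ContinuousLinearMap.le_re_of_mem_spectrum_of_forall_mul_sq_norm_le hT hμ
    linarith [norm_nonneg (L - T)]
  · calc μ.re ≤ ‖T‖ := (Complex.re_le_norm μ).trans (spectrum.norm_le_norm_of_mem hμ)
      _ ≤ ‖L‖ + ‖L - T‖ := norm_le_norm_add_norm_sub L T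
      _ < ‖L‖ + c / 2 := by linarith

/-- If `L` is a positive isomorphism with inverse `L'` and `⟨Lx,x⟩ ≥ c > 0` on
unit vectors, and `T` is self-adjoint with `‖L - T‖ < min (1/‖L'‖) (c/2)`, then
`σ(T) ⊆ (c/3, ‖L‖ + c/2)`. -/
theorem spectrum_perturbation_subset_Ioo
    {H : Type*} [NormedAddCommGroup H] [InnerProductSpace ℂ H] [CompleteSpace H]
    (L L' T : H →L[ℂ] H)
    (hsa : IsSelfAdjoint L) (hinv₁ : L * L' = 1) (hinv₂ : L' * L = 1)
    (hpos : ∀ x : H, x ≠ 0 → 0 < (inner ℂ (L x) x : ℂ).re)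
    (c : ℝ) (hc : 0 < c) (hlb : ∀ x : H, ‖x‖ = 1 → c ≤ (inner ℂ (L x) x : ℂ).re)
    (hTsa : IsSelfAdjoint T)
    (hnear : ‖L - T‖ < min (1 / ‖L'‖) (c / 2)) :
    spectrum ℂ T ⊆ (fun t : ℝ => (t : ℂ)) '' Set.Ioo (c / 3) (‖L‖ + c / 2) :=
  spectrum_perturbation_subset_Ioo_general L L' T c hlb hTsa hnear
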